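/- Any injective-message-passing temporal graph network (IMP-TGN) representation can be exactly simulated by an RTRGN: for every choice of aggregation function AGG and combine function COMBINE there exist choices of the RTRGN functions TR, RMSG, and UPDATE such that the RTRGN produces identical node embeddings to the IMP-TGN on every temporal graph input; hence RTRGN is at least as expressive as IMP-TGN in temporal graph isomorphism testing. -/

import Mathlib

/-!
The revision of an RTRGN can carry the multiset of pairs `(h^{k-1}_v(t), Φ(e))` over the events
before `t`: `TR` only has to forget the other components. As `E(t)` is the disjoint union of the
events before `t` and those at `t`, `RMSG` then sees the whole IMP-TGN neighbourhood and can apply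
`COMBINE ∘ AGG`; with an `UPDATE` that discards its memory, `h^k_u(t) = m^k_u(t)` agrees with the
IMP-TGN embedding by induction on `k`. Equal embeddings transfer any isomorphism witness.
-/

/-- A temporal graph on node type `V`: a finite set of timed edge events. -/
structure TemporalGraph (V : Type) where
  events : Finset (V × V × ℕ)

/-- The multiset of (neighbor, event time) pairs of `u` over events up to time `t`. -/
def nbrs {V : Type} [DecidableEq V] (G : TemporalGraph V) (t : ℕ) (u : V) :
    Multiset (V × ℕ) :=
  (G.events.filter (fun e => e.1 = u ∧ e.2.2 ≤ t)).val.map (fun e => (e.2.1, e.2.2))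

/-- The multiset of (neighbor, event time) pairs over events strictly before `t`
(the set `E(t^-)`). -/
def nbrsBefore {V : Type} [DecidableEq V] (G : TemporalGraph V) (t : ℕ) (u : V) :
    Multiset (V × ℕ) :=
  (G.events.filter (fun e => e.1 = u ∧ e.2.2 < t)).val.map (fun e => (e.2.1, e.2.2))

/-- The multiset of (neighbor, event time) pairs over events occurring exactly at `t`. -/
def nbrsAt {V : Type} [DecidableEq V] (G : TemporalGraph V) (t : ℕ) (u : V) :
    Multiset (V × ℕ) :=
  (G.events.filter (fun e => e.1 = u ∧ e.2.2 = t)).val.map (fun e => (e.2.1, e.2.2))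

/-- IMP-TGN embedding:
`h^{k+1}_u(t) = COMBINE^{k+1}(h^k_u(t), AGG^{k+1}({(h^k_v(t), Φ(e_{uv,t'})) : e ∈ E(t)}))`
built on a base embedding `h0`. -/
def impEmb {V E F : Type} [DecidableEq V] (G : TemporalGraph V) (Φ : V × V × ℕ → F)
    (h0 : V → ℕ → E) (AGG : ℕ → Multiset (E × F) → E) (COMBINE : ℕ → E → E → E) :
    ℕ → V → ℕ → E
  | 0, u, t => h0 u t
  | k + 1, u, t =>
      COMBINE (k + 1) (impEmb G Φ h0 AGG COMBINE k u t)
        (AGG (k + 1) ((nbrs G t u).map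
          (fun p => (impEmb G Φ h0 AGG COMBINE k p.1 t, Φ (u, p.1, p.2)))))

/-- The RTRGN layers: `rtrPair … k = (r^k, h^k)` where
`r^k_u(t) = TR^k({(r^{k-1}_v(t), h^{k-1}_v(t), h^{k-1}_v(t^-), Φ(e_{uv,t'})) : e ∈ E(t^-)})`,
`m^k_u(t) = RMSG^k(h^{k-1}_u(t), {(h^{k-1}_v(t), Φ(e_{uv,t})) : e at time t}, r^k_u(t))`, and
`h^k_u(t) = UPDATE^k(h^k_u(t^-), m^k_u(t))` with initial hidden state `hinit`. -/
def rtrPair {V E F R : Type} [DecidableEq V] (G : TemporalGraph V) (Φ : V × V × ℕ → F)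
    (TR : ℕ → Multiset (R × E × E × F) → R)
    (RMSG : ℕ → E → Multiset (E × F) → R → E)
    (UPDATE : ℕ → E → E → E)
    (hinit : ℕ → V → E) (r0 : R) (h0 : V → ℕ → E) :
    ℕ → ((V → ℕ → R) × (V → ℕ → E))
  | 0 => (fun _ _ => r0, h0)
  | k + 1 =>
      let prev := rtrPair G Φ TR RMSG UPDATE hinit r0 h0 k
      let r : V → ℕ → R := fun u t =>
        TR (k + 1) ((nbrsBefore G t u).map (fun p =>
          (prev.1 p.1 t, prev.2 p.1 t, prev.2 p.1 (t - 1), Φ (u, p.1, p.2))))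
      let m : V → ℕ → E := fun u t =>
        RMSG (k + 1) (prev.2 u t)
          ((nbrsAt G t u).map (fun p => (prev.2 p.1 t, Φ (u, p.1, p.2)))) (r u t)
      let h : V → ℕ → E := fun u t =>
        Nat.rec (motive := fun _ => E)
          (UPDATE (k + 1) (hinit (k + 1) u) (m u 0))
          (fun t' ih => UPDATE (k + 1) ih (m u (t' + 1))) t
      (r, h)

theorem nbrs_eq_nbrsBefore_add_nbrsAt {V : Type} [DecidableEq V] (G : TemporalGraph V)
    (t : ℕ) (u : V) : nbrs G t u = nbrsBefore G t u + nbrsAt G t u := by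
  have hsplit : G.events.filter (fun e => e.1 = u ∧ e.2.2 ≤ t) =
      G.events.filter (fun e => e.1 = u ∧ e.2.2 < t) ∪
        G.events.filter (fun e => e.1 = u ∧ e.2.2 = t) := by
    rw [← Finset.filter_or]
    exact Finset.filter_congr fun e _ => by rw [le_iff_lt_or_eq, and_or_left]
  have hdisj : Disjoint (G.events.filter (fun e => e.1 = u ∧ e.2.2 < t))
      (G.events.filter (fun e => e.1 = u ∧ e.2.2 = t)) :=
    Finset.disjoint_filter.2 fun e _ h h' => by omega
  rw [nbrs, nbrsBefore, nbrsAt, hsplit, ← Finset.disjUnion_eq_union _ _ hdisj,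
    ← Multiset.map_add]
  rfl

theorem rtrPair_succ_snd_of_update_eq_msg {V E F R : Type} [DecidableEq V]
    (G : TemporalGraph V) (Φ : V × V × ℕ → F) (TR : ℕ → Multiset (R × E × E × F) → R)
    (RMSG : ℕ → E → Multiset (E × F) → R → E) (hinit : ℕ → V → E) (r0 : R)
    (h0 : V → ℕ → E) (k : ℕ) (u : V) (t : ℕ) :
    let prev := rtrPair G Φ TR RMSG (fun _ _ m => m) hinit r0 h0 k
    (rtrPair G Φ TR RMSG (fun _ _ m => m) hinit r0 h0 (k + 1)).2 u t =
      RMSG (k + 1) (prev.2 u t)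
        ((nbrsAt G t u).map (fun p => (prev.2 p.1 t, Φ (u, p.1, p.2))))
        (TR (k + 1) ((nbrsBefore G t u).map (fun p =>
          (prev.1 p.1 t, prev.2 p.1 t, prev.2 p.1 (t - 1), Φ (u, p.1, p.2))))) := by
  rw [rtrPair]
  cases t <;> rfl

section Simulation

variable {V E F : Type} [DecidableEq V]

def copyTR (_ : ℕ) (s : Multiset (Multiset (E × F) × E × E × F)) : Multiset (E × F) :=
  s.map fun q => (q.2.1, q.2.2.2)

def combineRMSG (AGG : ℕ → Multiset (E × F) → E) (COMBINE : ℕ → E → E → E) (k : ℕ) (h : E)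
    (current revision : Multiset (E × F)) : E :=
  COMBINE k h (AGG k (revision + current))

theorem rtrPair_combineRMSG_eq_impEmb (AGG : ℕ → Multiset (E × F) → E)
    (COMBINE : ℕ → E → E → E) (hinit : ℕ → V → E) (G : TemporalGraph V)
    (Φ : V × V × ℕ → F) (h0 : V → ℕ → E) (k : ℕ) (u : V) (t : ℕ) :
    (rtrPair G Φ copyTR (combineRMSG AGG COMBINE) (fun _ _ m => m) hinit 0 h0 k).2 u t =
      impEmb G Φ h0 AGG COMBINE k u t := by
  induction k generalizing u t with
  | zero => rfl
  | succ k ih =>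
    simp only [rtrPair_succ_snd_of_update_eq_msg, combineRMSG, copyTR, Multiset.map_map,
      Function.comp_def, ih, impEmb, nbrs_eq_nbrsBefore_add_nbrsAt, Multiset.map_add]

end Simulation

/-- Any IMP-TGN representation can be exactly simulated by an RTRGN: for every `AGG`
and `COMBINE` there exist `TR`, `RMSG`, `UPDATE` (and initial values) such that the
RTRGN produces identical node embeddings on every temporal graph input; hence RTRGN is
at least as expressive as IMP-TGN in temporal graph isomorphism testing. -/
theorem stmt6 {V E F : Type} [DecidableEq V]
    (AGG : ℕ → Multiset (E × F) → E) (COMBINE : ℕ → E → E → E) :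
    ∃ (R : Type) (r0 : R) (TR : ℕ → Multiset (R × E × E × F) → R)
      (RMSG : ℕ → E → Multiset (E × F) → R → E)
      (UPDATE : ℕ → E → E → E) (hinit : ℕ → V → E),
      (∀ (G : TemporalGraph V) (Φ : V × V × ℕ → F) (h0 : V → ℕ → E)
          (k : ℕ) (u : V) (t : ℕ),
        (rtrPair G Φ TR RMSG UPDATE hinit r0 h0 k).2 u t
          = impEmb G Φ h0 AGG COMBINE k u t) ∧
      (∀ (G₁ G₂ : TemporalGraph V) (Φ : V × V × ℕ → F) (h0₁ h0₂ : V → ℕ → E)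
          (K t : ℕ),
        (∃ π : Equiv.Perm V, ∀ u : V, ∀ t' ≤ t,
          (rtrPair G₁ Φ TR RMSG UPDATE hinit r0 h0₁ K).2 u t'
            = (rtrPair G₂ Φ TR RMSG UPDATE hinit r0 h0₂ K).2 (π u) t') →
        (∃ π : Equiv.Perm V, ∀ u : V, ∀ t' ≤ t,
          impEmb G₁ Φ h0₁ AGG COMBINE K u t'
            = impEmb G₂ Φ h0₂ AGG COMBINE K (π u) t')) := by
  -- `AGG 0 0` is an element of `E`, needed because `E` may be empty when `V` is not.
  have hsim := rtrPair_combineRMSG_eq_impEmb (V := V) AGG COMBINE fun _ _ => AGG 0 0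
  refine ⟨_, 0, copyTR, combineRMSG AGG COMBINE, fun _ _ m => m, fun _ _ => AGG 0 0,
    hsim, ?_⟩
  rintro G₁ G₂ Φ h0₁ h0₂ K t ⟨π, hπ⟩
  simp only [hsim] at hπ
  exact ⟨π, hπ⟩
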